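/- Let L = {ℓ₁ < ℓ₂ < ... < ℓ_s} be a set of s positive integers and let F ⊆ 2^[n] be an L-intersecting Sperner family in which every member has size at most M. If F is trivially ℓ₁-intersecting (there is a set A of size ℓ₁ contained in every member of F), then |F| ≤ ∑_{i=0}^{s} C(n-2, i). -/

import Mathlib

/-!
Removing the common core `A` (of size `ℓ₁ ≥ 1`) turns `F` into a Sperner family on the
`n - ℓ₁ ≤ n - 1` points outside `A` whose pairwise intersections have sizes in `L - ℓ₁`.
For a Sperner family `G` on a ground set `X` with intersection sizes in `Λ`, fix `z ∈ X` and
attach to `B ∈ G` the multilinear polynomial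
`f_B(S) = ∏_{ℓ ∈ Λ, ℓ < |B|} (|S ∩ (B \ {z})| + [z ∈ B] - ℓ)` in the variables of `X \ {z}`.
It does not vanish at `B`, and vanishes at `B' ≠ B` as soon as `z ∈ B'` or `z ∉ B`, because then
it equals `∏ (|B ∩ B'| - ℓ)` and `|B ∩ B'| < |B|` is one of the `ℓ`. Listing the members that
contain `z` first makes the evaluation matrix triangular, so the `f_B` are linearly independent
in the space of multilinear polynomials of degree `≤ |Λ|` in `|X| - 1` variables, of dimension
`∑_{i ≤ |Λ|} C(|X| - 1, i)`.
-/

open Finset Submodule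

theorem linearIndependent_of_eval_triangular {ι X K : Type*} [Fintype ι] [CommRing K]
    [NoZeroDivisors K] (f : ι → X → K) (p : ι → X) (r : ι → ℕ)
    (hdiag : ∀ i, f i (p i) ≠ 0) (hoff : ∀ i j, i ≠ j → r i ≤ r j → f j (p i) = 0) :
    LinearIndependent K f := by
  rw [Fintype.linearIndependent_iff]
  intro g hg i
  induction hri : r i using Nat.strong_induction_on generalizing i with
  | _ k ih =>
    have heval : ∑ j, g j * f j (p i) = 0 := by simpa using congrFun hg (p i)
    rw [Finset.sum_eq_single i ?_ (by simp)] at heval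
    · exact (mul_eq_zero.1 heval).resolve_right (hdiag i)
    intro j _ hji
    rcases le_or_gt (r i) (r j) with h | h
    · rw [hoff i j (Ne.symm hji) h, mul_zero]
    · rw [ih (r j) (hri ▸ h) j rfl, zero_mul]

section

variable {α : Type*} [DecidableEq α]

/-- The multilinear monomial `∏_{t ∈ T} x_t`, evaluated at the characteristic vector of `S`. -/
def subsetIndicator (T : Finset α) : Finset α → ℚ := fun S => if T ⊆ S then 1 else 0

def lowDegreeSpan (Y : Finset α) (k : ℕ) : Submodule ℚ (Finset α → ℚ) :=
  span ℚ (subsetIndicator '' {T | T ⊆ Y ∧ #T ≤ k})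

theorem subsetIndicator_mem_lowDegreeSpan {Y T : Finset α} {k : ℕ} (hTY : T ⊆ Y)
    (hTk : #T ≤ k) : subsetIndicator T ∈ lowDegreeSpan Y k :=
  subset_span ⟨T, ⟨hTY, hTk⟩, rfl⟩

theorem lowDegreeSpan_mono (Y : Finset α) {k l : ℕ} (h : k ≤ l) :
    lowDegreeSpan Y k ≤ lowDegreeSpan Y l :=
  span_mono <| Set.image_mono fun _ hT => ⟨hT.1, hT.2.trans h⟩

theorem finrank_lowDegreeSpan_le (Y : Finset α) (k : ℕ) :
    Module.finrank ℚ (lowDegreeSpan Y k) ≤ ∑ i ∈ range (k + 1), (#Y).choose i := by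
  have hsets : {T | T ⊆ Y ∧ #T ≤ k} = ↑((range (k + 1)).biUnion Y.powersetCard) := by
    ext T
    simp [and_comm]
  rw [lowDegreeSpan, hsets, Set.image_eq_range]
  calc Module.finrank ℚ _
      ≤ Fintype.card ((range (k + 1)).biUnion Y.powersetCard) := finrank_range_le_card _
    _ = #((range (k + 1)).biUnion Y.powersetCard) := Fintype.card_coe _
    _ ≤ ∑ i ∈ range (k + 1), #(Y.powersetCard i) := card_biUnion_le
    _ = ∑ i ∈ range (k + 1), (#Y).choose i := by simp only [card_powersetCard]

theorem interCard_add_mul_subsetIndicator (C T : Finset α) (e : ℚ) :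
    (fun S => (#(S ∩ C) : ℚ) + e) * subsetIndicator T
      = e • subsetIndicator T + ∑ b ∈ C, subsetIndicator (insert b T) := by
  funext S
  simp only [Pi.mul_apply, Pi.add_apply, Pi.smul_apply, Finset.sum_apply, subsetIndicator,
    smul_eq_mul, insert_subset_iff]
  split_ifs with hTS
  · simp [hTS, inter_comm, add_comm]
  · simp [hTS]

theorem interCard_add_mul_mem_lowDegreeSpan {Y C : Finset α} (hCY : C ⊆ Y) (e : ℚ) {k : ℕ}
    {g : Finset α → ℚ} (hg : g ∈ lowDegreeSpan Y k) :
    (fun S => (#(S ∩ C) : ℚ) + e) * g ∈ lowDegreeSpan Y (k + 1) := by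
  induction hg using span_induction with
  | mem f hf =>
    obtain ⟨T, ⟨hTY, hTk⟩, rfl⟩ := hf
    rw [interCard_add_mul_subsetIndicator]
    refine add_mem (smul_mem _ _ (subsetIndicator_mem_lowDegreeSpan hTY (by omega)))
      (sum_mem fun b hb => subsetIndicator_mem_lowDegreeSpan (insert_subset (hCY hb) hTY) ?_)
    exact (card_insert_le _ _).trans (by omega)
  | zero => simp
  | add f g _ _ hf hg => rw [mul_add]; exact add_mem hf hg
  | smul a f _ hf => rw [mul_smul_comm]; exact smul_mem _ a hf

theorem prod_interCard_add_mem_lowDegreeSpan {Y C : Finset α} (hCY : C ⊆ Y) (c : ℕ → ℚ)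
    (Λ : Finset ℕ) : (∏ ℓ ∈ Λ, fun S => (#(S ∩ C) : ℚ) + c ℓ) ∈ lowDegreeSpan Y #Λ := by
  induction Λ using Finset.induction_on with
  | empty =>
    have h : (1 : Finset α → ℚ) = subsetIndicator ∅ := by funext S; simp [subsetIndicator]
    rw [prod_empty, card_empty, h]
    exact subsetIndicator_mem_lowDegreeSpan (empty_subset _) le_rfl
  | insert a Λ ha ih =>
    rw [prod_insert ha, card_insert_of_notMem ha]
    exact interCard_add_mul_mem_lowDegreeSpan hCY _ ih

instance (Y : Finset α) (k : ℕ) : FiniteDimensional ℚ (lowDegreeSpan Y k) :=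
  FiniteDimensional.span_of_finite ℚ
    ((Y.powerset.finite_toSet.subset fun _ hT => mem_powerset.2 hT.1).image _)

/-- Only the variables of `B.erase z` occur; the constant `[z ∈ B]` restores the missing one
whenever `z ∈ S` or `z ∉ B` (see `intersectionPoly_apply`). -/
def intersectionPoly (z : α) (Λ : Finset ℕ) (B : Finset α) : Finset α → ℚ :=
  ∏ ℓ ∈ Λ with ℓ < #B, fun S => (#(S ∩ B.erase z) : ℚ) + ((if z ∈ B then 1 else 0) - ℓ)

theorem intersectionPoly_mem_lowDegreeSpan {Y B : Finset α} {z : α} (hBY : B.erase z ⊆ Y)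
    (Λ : Finset ℕ) : intersectionPoly z Λ B ∈ lowDegreeSpan Y #Λ :=
  lowDegreeSpan_mono Y (card_filter_le _ _) (prod_interCard_add_mem_lowDegreeSpan hBY _ _)

theorem card_inter_erase_add_ite {z : α} {B S : Finset α} (h : z ∈ S ∨ z ∉ B) :
    (#(S ∩ B.erase z) : ℚ) + (if z ∈ B then 1 else 0) = #(B ∩ S) := by
  by_cases hzB : z ∈ B
  · have hz : z ∈ S ∩ B := mem_inter.2 ⟨h.resolve_right (not_not.2 hzB), hzB⟩
    rw [if_pos hzB, inter_erase, inter_comm B S]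
    exact_mod_cast card_erase_add_one hz
  · rw [if_neg hzB, erase_eq_of_notMem hzB, add_zero, inter_comm]

theorem intersectionPoly_apply {z : α} {Λ : Finset ℕ} {B S : Finset α} (h : z ∈ S ∨ z ∉ B) :
    intersectionPoly z Λ B S = ∏ ℓ ∈ Λ with ℓ < #B, ((#(B ∩ S) : ℚ) - ℓ) := by
  rw [intersectionPoly, prod_apply]
  exact prod_congr rfl fun ℓ _ => by rw [add_sub, card_inter_erase_add_ite h]

theorem intersectionPoly_self_ne_zero (z : α) (Λ : Finset ℕ) (B : Finset α) :
    intersectionPoly z Λ B B ≠ 0 := by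
  rw [intersectionPoly_apply (em (z ∈ B)), inter_self, prod_ne_zero_iff]
  intro ℓ hℓ
  exact sub_ne_zero.2 (Nat.cast_injective.ne (mem_filter.1 hℓ).2.ne')

theorem intersectionPoly_apply_eq_zero {z : α} {Λ : Finset ℕ} {B S : Finset α}
    (hBS : ¬ B ⊆ S) (hΛ : #(B ∩ S) ∈ Λ) (h : z ∈ S ∨ z ∉ B) :
    intersectionPoly z Λ B S = 0 := by
  rw [intersectionPoly_apply h]
  have hlt : #(B ∩ S) < #B :=
    card_lt_card (inter_subset_left.ssubset_of_ne fun he => hBS (inter_eq_left.1 he))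
  exact prod_eq_zero (mem_filter.2 ⟨hΛ, hlt⟩) (sub_self _)

theorem card_le_of_isAntichain_of_pairwise_inter {X : Finset α} {Λ : Finset ℕ}
    {G : Finset (Finset α)} (hGX : ∀ B ∈ G, B ⊆ X)
    (hG : IsAntichain (· ⊆ ·) (G : Set (Finset α)))
    (hΛ : (G : Set (Finset α)).Pairwise fun B B' => #(B ∩ B') ∈ Λ) :
    #G ≤ ∑ i ∈ range (#Λ + 1), (#X - 1).choose i := by
  obtain rfl | ⟨z, hz⟩ := X.eq_empty_or_nonempty
  · refine (card_le_one.2 fun B hB B' hB' => ?_).trans (by simp [sum_range_succ'])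
    rw [subset_empty.1 (hGX B hB), subset_empty.1 (hGX B' hB')]
  let f : G → Finset α → ℚ := fun B => intersectionPoly z Λ B
  have hli : LinearIndependent ℚ f := by
    refine linearIndependent_of_eval_triangular f (fun B => B.1)
      (fun B => if z ∈ B.1 then 0 else 1) (fun B => intersectionPoly_self_ne_zero z Λ B)
      fun B B' hne hr => ?_
    have hne' : B'.1 ≠ B.1 := fun h => hne (Subtype.ext h).symm
    refine intersectionPoly_apply_eq_zero (hG B'.2 B.2 hne') (hΛ B'.2 B.2 hne') ?_
    split_ifs at hr <;> simp_all
  calc #G = Fintype.card G := (Fintype.card_coe G).symm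
    _ = Module.finrank ℚ (span ℚ (Set.range f)) := (finrank_span_eq_card hli).symm
    _ ≤ Module.finrank ℚ (lowDegreeSpan (X.erase z) #Λ) :=
        Submodule.finrank_mono <| span_le.2 <| Set.range_subset_iff.2 fun B =>
          intersectionPoly_mem_lowDegreeSpan (erase_subset_erase z (hGX B B.2)) Λ
    _ ≤ ∑ i ∈ range (#Λ + 1), (#X - 1).choose i := by
        simpa only [card_erase_of_mem hz] using finrank_lowDegreeSpan_le (X.erase z) #Λ

theorem card_le_of_isAntichain_of_pairwise_inter_of_forall_subset [Fintype α] {A : Finset α}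
    {L : Finset ℕ} {F : Finset (Finset α)} (hA : ∀ B ∈ F, A ⊆ B)
    (hF : IsAntichain (· ⊆ ·) (F : Set (Finset α)))
    (hL : (F : Set (Finset α)).Pairwise fun B B' => #(B ∩ B') ∈ L) :
    #F ≤ ∑ i ∈ range (#L + 1), (#Aᶜ - 1).choose i := by
  have hinj : Set.InjOn (· \ A) F := fun B hB B' hB' h =>
    (sdiff_left_inj (hA B hB) (hA B' hB')).1 h
  calc #F = #(F.image (· \ A)) := (card_image_of_injOn hinj).symm
    _ ≤ ∑ i ∈ range (#(L.image (· - #A)) + 1), (#Aᶜ - 1).choose i := by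
        refine card_le_of_isAntichain_of_pairwise_inter ?_ ?_ ?_
        · simp only [mem_image]
          rintro _ ⟨B, -, rfl⟩ x hx
          exact mem_compl.2 (mem_sdiff.1 hx).2
        · rw [coe_image]
          refine Set.Pairwise.image fun B hB B' hB' hne h => hF hB hB' hne ?_
          exact (sdiff_le_iff.1 h).trans (union_sdiff_of_subset (hA B' hB')).le
        · rw [coe_image]
          refine Set.Pairwise.image fun B hB B' hB' hne => ?_
          have hinter : B \ A ∩ (B' \ A) = (B ∩ B') \ A := inf_sdiff.symm
          rw [Function.onFun, hinter, card_sdiff_of_subset (subset_inter (hA B hB) (hA B' hB'))]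
          exact mem_image_of_mem _ (hL hB hB' hne)
    _ ≤ ∑ i ∈ range (#L + 1), (#Aᶜ - 1).choose i :=
        sum_le_sum_of_subset (range_subset_range.2 (Nat.add_le_add_right card_image_le 1))

end

theorem stmt_3_general (n s : ℕ) (L : Finset ℕ) (hL : L.card = s) (hLne : L.Nonempty)
    (hpos : ∀ ℓ ∈ L, 0 < ℓ)
    (F : Finset (Finset (Fin n)))
    (hSperner : ∀ A ∈ F, ∀ B ∈ F, A ≠ B → ¬ A ⊆ B)
    (hInt : ∀ A ∈ F, ∀ B ∈ F, A ≠ B → (A ∩ B).card ∈ L)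
    (htriv : ∃ A : Finset (Fin n), A.card = L.min' hLne ∧ ∀ B ∈ F, A ⊆ B) :
    F.card ≤ ∑ i ∈ Finset.range (s + 1), (n - 2).choose i := by
  obtain ⟨A, hAcard, hA⟩ := htriv
  have hApos : 0 < #A := hAcard ▸ hpos _ (L.min'_mem hLne)
  have hcompl : #Aᶜ - 1 ≤ n - 2 := by
    rw [card_compl, Fintype.card_fin]
    omega
  calc #F ≤ ∑ i ∈ range (#L + 1), (#Aᶜ - 1).choose i :=
        card_le_of_isAntichain_of_pairwise_inter_of_forall_subset hA hSperner hInt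
    _ ≤ ∑ i ∈ range (s + 1), (n - 2).choose i := by
        rw [hL]
        gcongr

theorem stmt_3 (n s M : ℕ) (L : Finset ℕ) (hL : L.card = s) (hLne : L.Nonempty)
    (hpos : ∀ ℓ ∈ L, 0 < ℓ)
    (F : Finset (Finset (Fin n)))
    (hSperner : ∀ A ∈ F, ∀ B ∈ F, A ≠ B → ¬ A ⊆ B)
    (hInt : ∀ A ∈ F, ∀ B ∈ F, A ≠ B → (A ∩ B).card ∈ L)
    (hM : ∀ A ∈ F, A.card ≤ M)
    (htriv : ∃ A : Finset (Fin n), A.card = L.min' hLne ∧ ∀ B ∈ F, A ⊆ B) :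
    F.card ≤ ∑ i ∈ Finset.range (s + 1), (n - 2).choose i :=
  stmt_3_general n s L hL hLne hpos F hSperner hInt htriv
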